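/- The numbers r_{k,m} of plateau polycubes of width k and lateral area m satisfy: (1) r_{k,2k+3} = (256/3)k^3 - 304k^2 + (1376/3)k - 280 for every integer k ≥ 4; (2) r_{k,2k+4} = (512/3)k^4 - (2624/3)k^3 + (6454/3)k^2 - (8509/3)k + 1632 for every integer k ≥ 5; (3) r_{k,2k+5} = (4096/15)k^5 - (5632/3)k^4 + (19888/3)k^3 - (42104/3)k^2 + (85888/5)k - 9512 for every integer k ≥ 6; (4) r_{k,2k+6} = (16384/45)k^6 - (48128/15)k^5 + (136256/9)k^4 - 45444k^3 + (3971986/45)k^2 - (1543582/15)k + 55440 for every integer k ≥ 7. -/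

import Mathlib

/-!
For `t < k` the binomial factor `C(k + t - i + k - 2, 2k - 2)` of `h_{k,k+t}` vanishes unless
`i ≤ t`, and for `i + j = t` the surviving term is `D(k - 1 - t + j, i) · C(2k - 2 + j, j)`.
Expanding `D(n, i) = ∑_{a+c=i} C(i, a) C(n + c, i)` and every binomial `C(x, m)` as
`x(x-1)⋯(x-m+1)/m!` shows that `h_{k,k+t}` is a polynomial of degree `t` in `k`. Since
`r_{k,2k+j} = ∑_{a+c=j} h_{k,k+a} h_{k,k+c}`, the four formulas follow from those for
`h_{k,k+t}`, `t ≤ 6`.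
-/

/-- Integer binomial coefficient with the convention
`C(a,b) = a!/(b!(a-b)!)` if `0 ≤ b ≤ a` and `C(a,b) = 0` otherwise. -/
def ichoose (a b : ℤ) : ℤ := if 0 ≤ b ∧ b ≤ a then (a.toNat.choose b.toNat : ℤ) else 0

/-- The Delannoy numbers `D(n,m) = ∑_{k=0}^m C(m,k) C(n+m-k, m)`. -/
def delannoy (n m : ℕ) : ℕ :=
  ∑ k ∈ Finset.range (m + 1), Nat.choose m k * Nat.choose (n + m - k) m

/-- `h k n = ∑_{i=0}^{k-1} D(k-1-i, i) C(n-i+k-2, 2k-2)` is the number of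
column-convex polyominoes with `k` columns and area `n`. -/
def ccPoly (k n : ℕ) : ℤ :=
  ∑ i ∈ Finset.range k,
    (delannoy (k - 1 - i) i : ℤ) * ichoose ((n : ℤ) - i + k - 2) (2 * (k : ℤ) - 2)

/-- `r k m = ∑_{i=k}^{m-k} h_{k,i} h_{k,m-i}` is the number of plateau polycubes
of width `k` and lateral area `m`. -/
def plateau (k m : ℕ) : ℤ :=
  ∑ i ∈ Finset.Icc k (m - k), ccPoly k i * ccPoly k (m - i)

open Finset

theorem ichoose_of_lt {a b : ℤ} (h : a < b) : ichoose a b = 0 :=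
  if_neg fun ⟨_, hba⟩ => (h.trans_le hba).false

theorem ichoose_natCast_add (a s : ℕ) : ichoose (a + s : ℕ) a = (a + s).choose s := by
  rw [ichoose, if_pos (by omega), Int.toNat_natCast, Int.toNat_natCast, Nat.choose_symm_add]

theorem delannoy_eq_sum_antidiagonal (n m : ℕ) :
    delannoy n m = ∑ p ∈ antidiagonal m, m.choose p.1 * (n + p.2).choose m := by
  rw [delannoy, Nat.sum_antidiagonal_eq_sum_range_succ (fun i j => m.choose i * (n + j).choose m)]
  refine sum_congr rfl fun i hi => ?_
  rw [Nat.add_sub_assoc (Nat.lt_succ_iff.1 (mem_range.1 hi))]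

theorem ccPoly_eq_sum_antidiagonal (t b : ℕ) :
    ccPoly (t + b + 1) (t + b + 1 + t) =
      ∑ p ∈ antidiagonal t,
        (delannoy (b + p.2) p.1 : ℤ) * (2 * (t + b) + p.2).choose p.2 := by
  rw [Nat.sum_antidiagonal_eq_sum_range_succ
      (fun i j => (delannoy (b + j) i : ℤ) * (2 * (t + b) + j).choose j), ccPoly,
    ← sum_subset (range_subset_range.2 (by omega : t.succ ≤ t + b + 1))]
  · refine sum_congr rfl fun i hi => ?_
    have hit : i ≤ t := Nat.lt_succ_iff.1 (mem_range.1 hi)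
    have hn : ((t + b + 1 + t : ℕ) : ℤ) - i + (t + b + 1 : ℕ) - 2 =
        (2 * (t + b) + (t - i) : ℕ) := by
      omega
    have hk : 2 * ((t + b + 1 : ℕ) : ℤ) - 2 = (2 * (t + b) : ℕ) := by omega
    rw [hn, hk, ichoose_natCast_add, show t + b + 1 - 1 - i = b + (t - i) by omega]
  · intro i _ hi
    rw [mem_range, not_lt] at hi
    rw [ichoose_of_lt (by omega), mul_zero]

theorem plateau_two_mul_add (k j : ℕ) :
    plateau k (2 * k + j) = ∑ p ∈ antidiagonal j, ccPoly k (k + p.1) * ccPoly k (k + p.2) := by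
  rw [Nat.sum_antidiagonal_eq_sum_range_succ (fun a c => ccPoly k (k + a) * ccPoly k (k + c)),
    plateau, show 2 * k + j - k = k + j by omega, ← Ico_add_one_right_eq_Icc,
    sum_Ico_eq_sum_range, show k + j + 1 - k = j.succ by omega]
  refine sum_congr rfl fun i hi => ?_
  have hij : i ≤ j := Nat.lt_succ_iff.1 (mem_range.1 hi)
  rw [show 2 * k + j - (k + i) = k + (j - i) by omega]

theorem cast_choose_eq_prod (a m : ℕ) :
    (a.choose m : ℚ) = (∏ j ∈ range m, ((a : ℚ) - j)) / m.factorial := by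
  rw [Nat.cast_choose_eq_descPochhammer_div, descPochhammer_eval_eq_prod_range]

theorem ccPoly_self {k : ℕ} (hk : 0 < k) : ccPoly k k = 1 := by
  obtain ⟨b, rfl⟩ : ∃ b, k = 0 + b + 1 := ⟨k - 1, by omega⟩
  simpa [delannoy] using ccPoly_eq_sum_antidiagonal 0 b

theorem cast_ccPoly_self_add_one {k : ℕ} (hk : 1 < k) :
    (ccPoly k (k + 1) : ℚ) = 4 * k - 4 := by
  obtain ⟨b, rfl⟩ : ∃ b, k = 1 + b + 1 := ⟨k - 2, by omega⟩
  simp [ccPoly_eq_sum_antidiagonal, delannoy_eq_sum_antidiagonal, Nat.sum_antidiagonal_succ]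
  ring

theorem cast_ccPoly_self_add_two {k : ℕ} (hk : 2 < k) :
    (ccPoly k (k + 2) : ℚ) = 8 * k ^ 2 - 19 * k + 16 := by
  obtain ⟨b, rfl⟩ : ∃ b, k = 2 + b + 1 := ⟨k - 3, by omega⟩
  simp [ccPoly_eq_sum_antidiagonal, delannoy_eq_sum_antidiagonal, Nat.sum_antidiagonal_succ,
    cast_choose_eq_prod, prod_range_succ]
  ring

theorem cast_ccPoly_self_add_three {k : ℕ} (hk : 3 < k) :
    (ccPoly k (k + 3) : ℚ) = 32 / 3 * k ^ 3 - 44 * k ^ 2 + 268 / 3 * k - 76 := by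
  obtain ⟨b, rfl⟩ : ∃ b, k = 3 + b + 1 := ⟨k - 4, by omega⟩
  simp [ccPoly_eq_sum_antidiagonal, delannoy_eq_sum_antidiagonal, Nat.sum_antidiagonal_succ,
    cast_choose_eq_prod, prod_range_succ]
  ring

theorem cast_ccPoly_self_add_four {k : ℕ} (hk : 4 < k) :
    (ccPoly k (k + 4) : ℚ) =
      32 / 3 * k ^ 4 - 200 / 3 * k ^ 3 + 1403 / 6 * k ^ 2 - 2717 / 6 * k + 384 := by
  obtain ⟨b, rfl⟩ : ∃ b, k = 4 + b + 1 := ⟨k - 5, by omega⟩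
  simp [ccPoly_eq_sum_antidiagonal, delannoy_eq_sum_antidiagonal, Nat.sum_antidiagonal_succ,
    cast_choose_eq_prod, prod_range_succ]
  ring

theorem cast_ccPoly_self_add_five {k : ℕ} (hk : 5 < k) :
    (ccPoly k (k + 5) : ℚ) =
      128 / 15 * k ^ 5 - 224 / 3 * k ^ 4 + 1174 / 3 * k ^ 3 - 3784 / 3 * k ^ 2
        + 35522 / 15 * k - 2004 := by
  obtain ⟨b, rfl⟩ : ∃ b, k = 5 + b + 1 := ⟨k - 6, by omega⟩
  simp [ccPoly_eq_sum_antidiagonal, delannoy_eq_sum_antidiagonal, Nat.sum_antidiagonal_succ,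
    cast_choose_eq_prod, prod_range_succ]
  ring

theorem cast_ccPoly_self_add_six {k : ℕ} (hk : 6 < k) :
    (ccPoly k (k + 6) : ℚ) =
      256 / 45 * k ^ 6 - 992 / 15 * k ^ 5 + 4292 / 9 * k ^ 4 - 13427 / 6 * k ^ 3
        + 617753 / 90 * k ^ 2 - 189503 / 15 * k + 10672 := by
  obtain ⟨b, rfl⟩ : ∃ b, k = 6 + b + 1 := ⟨k - 7, by omega⟩
  simp [ccPoly_eq_sum_antidiagonal, delannoy_eq_sum_antidiagonal, Nat.sum_antidiagonal_succ,
    cast_choose_eq_prod, prod_range_succ]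
  ring

/-- Polynomial expressions for `r_{k,2k+i}` for `i = 3, 4, 5, 6`. -/
theorem plateau_higher_values :
    (∀ k : ℕ, 4 ≤ k → (plateau k (2 * k + 3) : ℚ)
        = 256 / 3 * (k : ℚ) ^ 3 - 304 * (k : ℚ) ^ 2 + 1376 / 3 * (k : ℚ) - 280) ∧
    (∀ k : ℕ, 5 ≤ k → (plateau k (2 * k + 4) : ℚ)
        = 512 / 3 * (k : ℚ) ^ 4 - 2624 / 3 * (k : ℚ) ^ 3 + 6454 / 3 * (k : ℚ) ^ 2
            - 8509 / 3 * (k : ℚ) + 1632) ∧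
    (∀ k : ℕ, 6 ≤ k → (plateau k (2 * k + 5) : ℚ)
        = 4096 / 15 * (k : ℚ) ^ 5 - 5632 / 3 * (k : ℚ) ^ 4 + 19888 / 3 * (k : ℚ) ^ 3
            - 42104 / 3 * (k : ℚ) ^ 2 + 85888 / 5 * (k : ℚ) - 9512) ∧
    (∀ k : ℕ, 7 ≤ k → (plateau k (2 * k + 6) : ℚ)
        = 16384 / 45 * (k : ℚ) ^ 6 - 48128 / 15 * (k : ℚ) ^ 5 + 136256 / 9 * (k : ℚ) ^ 4
            - 45444 * (k : ℚ) ^ 3 + 3971986 / 45 * (k : ℚ) ^ 2 - 1543582 / 15 * (k : ℚ)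
            + 55440) := by
  refine ⟨fun k hk => ?_, fun k hk => ?_, fun k hk => ?_, fun k hk => ?_⟩ <;>
    simp only [plateau_two_mul_add, Nat.sum_antidiagonal_succ, Nat.antidiagonal_zero,
      sum_singleton, add_zero, Int.cast_add, Int.cast_mul, Int.cast_one,
      ccPoly_self (by omega : 0 < k),
      cast_ccPoly_self_add_one (by omega : 1 < k), cast_ccPoly_self_add_two (by omega : 2 < k),
      cast_ccPoly_self_add_three (by omega : 3 < k)]
  · ring
  · rw [cast_ccPoly_self_add_four (by omega)]
    ring
  · rw [cast_ccPoly_self_add_four (by omega), cast_ccPoly_self_add_five (by omega)]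
    ring
  · rw [cast_ccPoly_self_add_four (by omega), cast_ccPoly_self_add_five (by omega),
      cast_ccPoly_self_add_six (by omega)]
    ring
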